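/- Let f be regulated on (a,b), α strictly increasing on (a,b), and suppose (D_α f)(x) exists for all x ∈ (a,b). If (D_α f)(x) ≥ 0 for all x ∈ (a,b), then f^+(x) ≤ f^-(y) for all a < x < y < b. -/

import Mathlib

/-!
For `ε > 0` consider `g = f + ε α`. Since the `α`-difference quotients of `f` at `t` tend to
`D t ≥ 0 > -ε` and the `α`-increments `α⁻(t+h) - α⁺(t-h)` are positive, `g⁺(t-h) ≤ g⁻(t+h)` for
all small `h > 0`. The function `g⁻` is left-continuous with right limits `g⁺`, and such a
symmetric inequality forces `g⁺(x) ≤ g⁻(y)` for `x < y`: otherwise take `c` strictly between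
and let `m` be the infimum of the points of `(x, y]` where `g⁻ < c`; reflecting such points across
`m` contradicts `g⁻ ≥ c` on `(x, m)`. Letting `ε → 0` gives `f⁺(x) ≤ f⁻(y)`.
-/

open Filter Topology Function Set MeasureTheory

/-- `x` lies in the interval `(a, b)` with extended-real endpoints. -/
def MemI (a b : EReal) (x : ℝ) : Prop := a < (x : EReal) ∧ (x : EReal) < b

/-- `f` is regulated on `(a, b)`: both one-sided limits exist (as real numbers)
at every point of `(a, b)`. -/
def RegulatedOn' (f : ℝ → ℝ) (a b : EReal) : Prop :=
  ∀ x : ℝ, MemI a b x →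
    (∃ L : ℝ, Tendsto f (𝓝[<] x) (𝓝 L)) ∧ ∃ R : ℝ, Tendsto f (𝓝[>] x) (𝓝 R)

/-- The symmetric `α`-derivative of `f` at `x` equals `A`:
`(D_α f)(x) = lim_{h↓0} (f⁻(x+h) - f⁺(x-h)) / (α⁻(x+h) - α⁺(x-h))`. -/
def HasDerivAlpha (f α : ℝ → ℝ) (x A : ℝ) : Prop :=
  Tendsto (fun h : ℝ =>
      (leftLim f (x + h) - rightLim f (x - h)) /
        (leftLim α (x + h) - rightLim α (x - h)))
    (𝓝[>] (0 : ℝ)) (𝓝 A)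

/-- The filter of real numbers approaching `b : EReal` from the left (`x ↑ b`). -/
noncomputable def leftFilter (b : EReal) : Filter ℝ := comap (fun x : ℝ => (x : EReal)) (𝓝[<] b)

/-- The filter of real numbers approaching `a : EReal` from the right (`x ↓ a`). -/
noncomputable def rightFilter (a : EReal) : Filter ℝ := comap (fun x : ℝ => (x : EReal)) (𝓝[>] a)


theorem tendsto_leftLim_nhdsGT_of_tendsto {α β : Type*} [LinearOrder α] [TopologicalSpace α]
    [OrderTopology α] [TopologicalSpace β] [RegularSpace β] {f : α → β} {a : α} {b : β}
    (h : Tendsto f (𝓝[>] a) (𝓝 b)) : Tendsto (leftLim f) (𝓝[>] a) (𝓝 b) := by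
  rcases eq_or_neBot (𝓝[>] a) with h' | h'
  · simp [h']
  obtain ⟨c, hc⟩ : (Ioi a).Nonempty := Filter.nonempty_of_mem (self_mem_nhdsWithin (a := a))
  refine (closed_nhds_basis b).tendsto_right_iff.2 fun s ⟨s_mem, s_closed⟩ => ?_
  obtain ⟨u, au, hu⟩ := (mem_nhdsGT_iff_exists_Ioo_subset' hc).1 (h s_mem)
  filter_upwards [Ioo_mem_nhdsGT au] with t ht
  refine s_closed.mem_of_mapClusterPt (mapClusterPt_leftLim f t) ?_
  filter_upwards [Ioc_mem_nhdsLE ht.1] with d hd using hu ⟨hd.1, hd.2.trans_lt ht.2⟩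

theorem le_of_forall_eventually_sub_le_add {L R : ℝ → ℝ} {x y : ℝ} (hxy : x < y)
    (hL : ∀ t ∈ Ioc x y, Tendsto L (𝓝[<] t) (𝓝 (L t)))
    (hR : ∀ t ∈ Ico x y, Tendsto L (𝓝[>] t) (𝓝 (R t)))
    (hsymm : ∀ t ∈ Ioc x y, ∀ᶠ h in 𝓝[>] 0, R (t - h) ≤ L (t + h)) :
    R x ≤ L y := by
  by_contra! hyx
  obtain ⟨c, hcy, hcx⟩ := exists_between hyx
  set E := {t ∈ Ioc x y | L t < c}
  have hyE : y ∈ E := ⟨right_mem_Ioc.2 hxy, hcy⟩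
  have hE : BddBelow E := ⟨x, fun t ht => ht.1.1.le⟩
  set m := sInf E
  have hxm : x ≤ m := le_csInf ⟨y, hyE⟩ fun t ht => ht.1.1.le
  have hmy : m ≤ y := csInf_le hE hyE
  have hnear : ∀ r, m < r → ∃ t ∈ E, t < r := fun r hr => exists_lt_of_csInf_lt ⟨y, hyE⟩ hr
  rcases hxm.eq_or_lt with hx_eq | hxm
  · obtain ⟨r, hxr, hr⟩ := mem_nhdsGT_iff_exists_Ioo_subset.1
      ((hR x ⟨le_rfl, hxy⟩).eventually (eventually_gt_nhds hcx))
    obtain ⟨t, htE, htr⟩ := hnear r (hx_eq ▸ hxr)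
    exact (hr ⟨htE.1.1, htr⟩).not_gt htE.2
  · have hge : ∀ t ∈ Ioo x m, c ≤ L t := fun t ht =>
      not_lt.1 fun h => (csInf_le hE ⟨⟨ht.1, ht.2.le.trans hmy⟩, h⟩).not_gt ht.2
    have hcm : c ≤ L m := ge_of_tendsto (hL m ⟨hxm, hmy⟩) <|
      eventually_of_mem (Ioo_mem_nhdsLT hxm) hge
    obtain ⟨δ, hδ : 0 < δ, hsymm_m⟩ := mem_nhdsGT_iff_exists_Ioo_subset.1 (hsymm m ⟨hxm, hmy⟩)
    obtain ⟨t, htE, htm⟩ := hnear (m + min δ (m - x)) (by simp [hδ, hxm])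
    have hmt : m < t := (csInf_le hE htE).lt_of_ne (by rintro rfl; exact hcm.not_gt htE.2)
    have hmin_δ := min_le_left δ (m - x)
    have hmin_x := min_le_right δ (m - x)
    -- reflect `t ∈ E` across `m`: `R (m - (t - m)) ≥ c` because `L ≥ c` on `(x, m)`
    have hsym : R (m - (t - m)) ≤ L t := by
      simpa using hsymm_m ⟨sub_pos.2 hmt, by linarith⟩
    have hRc : c ≤ R (m - (t - m)) := ge_of_tendsto (hR _ ⟨by linarith, by linarith⟩) <|
      eventually_of_mem (Ioo_mem_nhdsGT (by linarith : m - (t - m) < m))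
        fun s hs => hge s ⟨by linarith [hs.1], hs.2⟩
    linarith [htE.2]

section MonotoneOn

variable {α β : Type*} [LinearOrder α] [TopologicalSpace α] [OrderTopology α] [DenselyOrdered α]
  [ConditionallyCompleteLinearOrder β] [TopologicalSpace β] [OrderTopology β]
  {f : α → β} {s : Set α}

theorem MonotoneOn.tendsto_leftLim_of_mem_nhds [NoMinOrder α] (hf : MonotoneOn f s) {x : α}
    (hx : s ∈ 𝓝 x) : Tendsto f (𝓝[<] x) (𝓝 (leftLim f x)) := by
  obtain ⟨p, hpx, hp⟩ := mem_nhdsLT_iff_exists_Ioo_subset.1 (mem_nhdsWithin_of_mem_nhds hx)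
  refine tendsto_leftLim_of_tendsto
    ⟨_, (hf.mono hp).tendsto_nhdsWithin_Ioo_left (nonempty_Ioo.2 hpx) ⟨f x, ?_⟩⟩
  rintro _ ⟨t, ht, rfl⟩
  exact hf (hp ht) (mem_of_mem_nhds hx) ht.2.le

theorem MonotoneOn.tendsto_rightLim_of_mem_nhds [NoMaxOrder α] (hf : MonotoneOn f s) {x : α}
    (hx : s ∈ 𝓝 x) : Tendsto f (𝓝[>] x) (𝓝 (rightLim f x)) := by
  obtain ⟨q, hxq, hq⟩ := mem_nhdsGT_iff_exists_Ioo_subset.1 (mem_nhdsWithin_of_mem_nhds hx)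
  refine tendsto_rightLim_of_tendsto
    ⟨_, (hf.mono hq).tendsto_nhdsWithin_Ioo_right (nonempty_Ioo.2 hxq) ⟨f x, ?_⟩⟩
  rintro _ ⟨t, ht, rfl⟩
  exact hf (mem_of_mem_nhds hx) (hq ht) ht.1.le

theorem StrictMonoOn.rightLim_lt_leftLim [NoMinOrder α] [NoMaxOrder α] (hf : StrictMonoOn f s)
    (hs : s.OrdConnected) {u v : α} (hu : s ∈ 𝓝 u) (hv : s ∈ 𝓝 v) (huv : u < v) :
    rightLim f u < leftLim f v := by
  obtain ⟨p, hup, hpv⟩ := exists_between huv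
  obtain ⟨q, hpq, hqv⟩ := exists_between hpv
  have mem : Icc u v ⊆ s := hs.out (mem_of_mem_nhds hu) (mem_of_mem_nhds hv)
  calc rightLim f u ≤ f p :=
        le_of_tendsto (hf.monotoneOn.tendsto_rightLim_of_mem_nhds hu) <|
          eventually_of_mem (Ioo_mem_nhdsGT hup) fun t ht =>
            hf.monotoneOn (mem ⟨ht.1.le, (ht.2.trans hpv).le⟩) (mem ⟨hup.le, hpv.le⟩) ht.2.le
    _ < f q := hf (mem ⟨hup.le, hpv.le⟩) (mem ⟨(hup.trans hpq).le, hqv.le⟩) hpq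
    _ ≤ leftLim f v :=
        ge_of_tendsto (hf.monotoneOn.tendsto_leftLim_of_mem_nhds hv) <|
          eventually_of_mem (Ioo_mem_nhdsLT hqv) fun t ht =>
            hf.monotoneOn (mem ⟨(hup.trans hpq).le, hqv.le⟩)
              (mem ⟨(hup.trans (hpq.trans ht.1)).le, ht.2.le⟩) ht.1.le

end MonotoneOn

theorem isOpen_setOf_memI (a b : EReal) : IsOpen {x : ℝ | MemI a b x} :=
  isOpen_Ioo.preimage continuous_coe_real_ereal

theorem ordConnected_setOf_memI (a b : EReal) : OrdConnected {x : ℝ | MemI a b x} :=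
  ordConnected_Ioo.preimage_mono EReal.coe_strictMono.monotone

namespace RegulatedOn'

variable {f : ℝ → ℝ} {a b : EReal}

theorem of_monotoneOn (hf : MonotoneOn f {x : ℝ | MemI a b x}) : RegulatedOn' f a b :=
  fun _ hx =>
    have hs := (isOpen_setOf_memI a b).mem_nhds hx
    ⟨⟨_, hf.tendsto_leftLim_of_mem_nhds hs⟩, ⟨_, hf.tendsto_rightLim_of_mem_nhds hs⟩⟩

variable (hf : RegulatedOn' f a b) {x : ℝ} (hx : MemI a b x)
include hf hx

theorem tendsto_leftLim : Tendsto f (𝓝[<] x) (𝓝 (leftLim f x)) :=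
  tendsto_leftLim_of_tendsto (hf x hx).1

theorem tendsto_rightLim : Tendsto f (𝓝[>] x) (𝓝 (rightLim f x)) :=
  tendsto_rightLim_of_tendsto (hf x hx).2

theorem tendsto_leftLim_nhdsLT_leftLim : Tendsto (leftLim f) (𝓝[<] x) (𝓝 (leftLim f x)) :=
  (continuousWithinAt_leftLim_Iic (hf.tendsto_leftLim hx)).mono Iio_subset_Iic_self

theorem tendsto_leftLim_nhdsGT_rightLim : Tendsto (leftLim f) (𝓝[>] x) (𝓝 (rightLim f x)) :=
  tendsto_leftLim_nhdsGT_of_tendsto (hf.tendsto_rightLim hx)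

end RegulatedOn'

theorem StrictMonoOn.eventually_rightLim_sub_lt_leftLim_add {α : ℝ → ℝ} {s : Set ℝ}
    (hα : StrictMonoOn α s) (hs : IsOpen s) (hs' : s.OrdConnected) {t : ℝ} (ht : t ∈ s) :
    ∀ᶠ h in 𝓝[>] 0, rightLim α (t - h) < leftLim α (t + h) := by
  have hsub : ∀ᶠ h in 𝓝 (0 : ℝ), t - h ∈ s :=
    ((continuous_const.sub continuous_id).tendsto' 0 t (sub_zero t)).eventually (hs.mem_nhds ht)
  have hadd : ∀ᶠ h in 𝓝 (0 : ℝ), t + h ∈ s :=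
    ((continuous_const.add continuous_id).tendsto' 0 t (add_zero t)).eventually (hs.mem_nhds ht)
  filter_upwards [nhdsWithin_le_nhds hsub, nhdsWithin_le_nhds hadd, self_mem_nhdsWithin]
    with h h₁ h₂ (h₀ : 0 < h)
  exact hα.rightLim_lt_leftLim hs' (hs.mem_nhds h₁) (hs.mem_nhds h₂) (by linarith)

theorem HasDerivAlpha.eventually_rightLim_add_mul_le {f α : ℝ → ℝ} {t A ε : ℝ}
    (hA : HasDerivAlpha f α t A) (hεA : -ε < A)
    (hα : ∀ᶠ h in 𝓝[>] 0, rightLim α (t - h) < leftLim α (t + h)) :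
    ∀ᶠ h in 𝓝[>] 0, rightLim f (t - h) + ε * rightLim α (t - h) ≤
      leftLim f (t + h) + ε * leftLim α (t + h) := by
  filter_upwards [hA.eventually (eventually_gt_nhds hεA), hα] with h hq hden
  have := (lt_div_iff₀ (sub_pos.2 hden)).1 hq
  linarith

theorem rightLim_add_mul_le_leftLim_add_mul {a b : EReal} {f α D : ℝ → ℝ}
    (hf : RegulatedOn' f a b) (hα : StrictMonoOn α {x : ℝ | MemI a b x})
    (hD : ∀ x : ℝ, MemI a b x → HasDerivAlpha f α x (D x))
    (hpos : ∀ x : ℝ, MemI a b x → 0 ≤ D x) {ε : ℝ} (hε : 0 < ε)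
    {x y : ℝ} (hx : MemI a b x) (hy : MemI a b y) (hxy : x < y) :
    rightLim f x + ε * rightLim α x ≤ leftLim f y + ε * leftLim α y := by
  have hαr : RegulatedOn' α a b := .of_monotoneOn hα.monotoneOn
  have mem : Icc x y ⊆ {t : ℝ | MemI a b t} := (ordConnected_setOf_memI a b).out hx hy
  refine le_of_forall_eventually_sub_le_add (L := fun t => leftLim f t + ε * leftLim α t)
    (R := fun t => rightLim f t + ε * rightLim α t) hxy (fun t ht => ?_) (fun t ht => ?_)
    (fun t ht => ?_)
  · have ht := mem (Ioc_subset_Icc_self ht)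
    exact (hf.tendsto_leftLim_nhdsLT_leftLim ht).add
      ((hαr.tendsto_leftLim_nhdsLT_leftLim ht).const_mul ε)
  · have ht := mem (Ico_subset_Icc_self ht)
    exact (hf.tendsto_leftLim_nhdsGT_rightLim ht).add
      ((hαr.tendsto_leftLim_nhdsGT_rightLim ht).const_mul ε)
  · have ht := mem (Ioc_subset_Icc_self ht)
    exact (hD t ht).eventually_rightLim_add_mul_le (by linarith [hpos t ht])
      (hα.eventually_rightLim_sub_lt_leftLim_add (isOpen_setOf_memI a b)
        (ordConnected_setOf_memI a b) ht)

theorem stmt10_general (a b : EReal) (f α : ℝ → ℝ) (D : ℝ → ℝ)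
    (hf : RegulatedOn' f a b) (hα : StrictMonoOn α {x : ℝ | MemI a b x})
    (hD : ∀ x : ℝ, MemI a b x → HasDerivAlpha f α x (D x))
    (hpos : ∀ x : ℝ, MemI a b x → 0 ≤ D x) :
    ∀ x y : ℝ, MemI a b x → MemI a b y → x < y → rightLim f x ≤ leftLim f y := by
  intro x y hx hy hxy
  have hlim : ∀ u v : ℝ, Tendsto (fun ε => u + ε * v) (𝓝[>] 0) (𝓝 u) := fun u v =>
    tendsto_nhdsWithin_of_tendsto_nhds <|
      (continuous_const.add (continuous_id.mul continuous_const)).tendsto' 0 u (by simp)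
  exact le_of_tendsto_of_tendsto (hlim _ (rightLim α x)) (hlim _ (leftLim α y)) <|
    eventually_mem_nhdsWithin.mono fun ε hε =>
      rightLim_add_mul_le_leftLim_add_mul hf hα hD hpos hε hx hy hxy

/-- If `D_α f ≥ 0` on `(a,b)`, then `f⁺(x) ≤ f⁻(y)` for all `a < x < y < b`. -/
theorem stmt10 (a b : EReal) (hab : a < b) (f α : ℝ → ℝ) (D : ℝ → ℝ)
    (hf : RegulatedOn' f a b) (hα : StrictMonoOn α {x : ℝ | MemI a b x})
    (hD : ∀ x : ℝ, MemI a b x → HasDerivAlpha f α x (D x))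
    (hpos : ∀ x : ℝ, MemI a b x → 0 ≤ D x) :
    ∀ x y : ℝ, MemI a b x → MemI a b y → x < y → rightLim f x ≤ leftLim f y :=
  stmt10_general a b f α D hf hα hD hpos
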